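/- arXiv:cs/0605099 — 6 statements merged into one kernel-verified Lean document; each statement's English description precedes it below -/
import Mathlib

section
/- Knuth's splitting-point monotonicity fails for the exponential cost with a = 0.6: for weights (8,1,9,6), the optimal splitting point of the full problem is s = 2, which does not lie between the optimal splitting point s = 3 for the prefix (8,1,9) and the optimal splitting point s = 4 for the suffix (1,9,6). (Splitting points and optimality are with respect to maximizing Σ w(i)·(0.6)^{l(i)} over alphabetic binary trees.) -/
open Real Finset

/-- Full binary tree: every internal node has two children. -/
inductive BTree where
  | leaf : BTree
  | node : BTree → BTree → BTree

namespace BTree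

/-- Depths of the leaves, read in left-to-right (inorder) order. -/
def depths : BTree → List ℕ
  | leaf => [0]
  | node l r => (l.depths ++ r.depths).map (· + 1)

/-- Number of leaves. -/
def numLeaves (t : BTree) : ℕ := t.depths.length

/-- The splitting point: smallest (1-based) leaf index of the right subtree. -/
def splitPoint : BTree → ℕ
  | leaf => 1
  | node l _ => l.numLeaves + 1

end BTree

/-- Binary tree possibly having single-child internal nodes. -/
inductive PTree where
  | leaf : PTree
  | node1 : PTree → PTree
  | node2 : PTree → PTree → PTree

def PTree.depths : PTree → List ℕ
  | .leaf => [0]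
  | .node1 t => t.depths.map (· + 1)
  | .node2 l r => (l.depths ++ r.depths).map (· + 1)

/-- `SubtreeAt t' o t` : `t'` is a subtree of `t` whose leaves are the leaves
`o, o+1, …` (0-based offset `o`) of `t`. -/
inductive SubtreeAt : BTree → ℕ → BTree → Prop
  | refl (t : BTree) : SubtreeAt t 0 t
  | left {t' : BTree} {o : ℕ} {l r : BTree} : SubtreeAt t' o l → SubtreeAt t' o (BTree.node l r)
  | right {t' : BTree} {o : ℕ} {l r : BTree} : SubtreeAt t' o r →
      SubtreeAt t' (l.numLeaves + o) (BTree.node l r)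

/-- Weighted exponential cost `∑ w(i)·a^{l(i)}` of a tree, weights given as a list. -/
noncomputable def cost (a : ℝ) (ws : List ℝ) (t : BTree) : ℝ :=
  (List.zipWith (fun wi d => wi * a ^ d) ws t.depths).sum

/-- `L_a(w,l) = log_a ∑ w(i) a^{l(i)}`, `Fin`-indexed. -/
noncomputable def La {n : ℕ} (a : ℝ) (w : Fin n → ℝ) (l : Fin n → ℕ) : ℝ :=
  Real.logb a (∑ i, w i * a ^ (l i))

/-- `L_a(w,l)`, ℕ-indexed with `n` symbols. -/
noncomputable def LaN (a : ℝ) (n : ℕ) (w : ℕ → ℝ) (l : ℕ → ℕ) : ℝ :=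
  Real.logb a (∑ i ∈ Finset.range n, w i * a ^ (l i))

/-- Costs achievable by alphabetic binary trees on `n` leaves with weights `w`. -/
noncomputable def AlphaSet (a : ℝ) (n : ℕ) (w : ℕ → ℝ) : Set ℝ :=
  {x | ∃ (lT : ℕ → ℕ) (T : BTree), T.depths = (List.range n).map lT ∧ x = LaN a n w lT}

/-- The indices `j..j+k` form a plateau of `l` which is a strict local minimum,
with strictly larger values at indices `j-1` and `j+k+1`, entirely interior to `0..n-1`. -/
def PlateauMin (n : ℕ) (l : ℕ → ℕ) (j k : ℕ) : Prop :=
  0 < j ∧ j + k + 1 < n ∧ l j < l (j - 1) ∧ (∀ m, j ≤ m → m ≤ j + k → l m = l j) ∧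
    l j < l (j + k + 1)

/-- The natural number a binary codeword (MSB first) represents. -/
def codeToNat (c : List Bool) : ℕ := c.foldl (fun n b => 2 * n + cond b 1 0) 0

/-- The `k`-bit binary codeword (MSB first) representing `m`. -/
def natToCode (k m : ℕ) : List Bool := (List.range k).map (fun i => m.testBit (k - 1 - i))


namespace BTree

@[simp] lemma numLeaves_leaf : numLeaves leaf = 1 := rfl

@[simp] lemma numLeaves_node (l r : BTree) :
    numLeaves (node l r) = numLeaves l + numLeaves r := by
  simp [numLeaves, depths]

lemma numLeaves_pos (t : BTree) : 0 < t.numLeaves := by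
  induction t with
  | leaf => simp
  | node l r ihl ihr => simp; omega

lemma eq_of_numLeaves_one {t : BTree} (h : t.numLeaves = 1) : t = leaf := by
  cases t with
  | leaf => rfl
  | node l r =>
    have hl := numLeaves_pos l
    have hr := numLeaves_pos r
    simp at h; omega

lemma eq_of_numLeaves_two {t : BTree} (h : t.numLeaves = 2) : t = node leaf leaf := by
  cases t with
  | leaf => simp [numLeaves, depths] at h
  | node l r =>
    have hl := numLeaves_pos l
    have hr := numLeaves_pos r
    simp at h
    have : l.numLeaves = 1 ∧ r.numLeaves = 1 := by omega
    rw [eq_of_numLeaves_one this.1, eq_of_numLeaves_one this.2]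

lemma eq_of_numLeaves_three {t : BTree} (h : t.numLeaves = 3) :
    t = node leaf (node leaf leaf) ∨ t = node (node leaf leaf) leaf := by
  cases t with
  | leaf => simp [numLeaves, depths] at h
  | node l r =>
    have hl := numLeaves_pos l
    have hr := numLeaves_pos r
    simp at h
    rcases (by omega : l.numLeaves = 1 ∧ r.numLeaves = 2 ∨ l.numLeaves = 2 ∧ r.numLeaves = 1)
      with ⟨h1, h2⟩ | ⟨h1, h2⟩
    · left; rw [eq_of_numLeaves_one h1, eq_of_numLeaves_two h2]
    · right; rw [eq_of_numLeaves_two h1, eq_of_numLeaves_one h2]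

lemma eq_of_numLeaves_four {t : BTree} (h : t.numLeaves = 4) :
    t = node leaf (node leaf (node leaf leaf)) ∨
    t = node leaf (node (node leaf leaf) leaf) ∨
    t = node (node leaf leaf) (node leaf leaf) ∨
    t = node (node leaf (node leaf leaf)) leaf ∨
    t = node (node (node leaf leaf) leaf) leaf := by
  cases t with
  | leaf => simp [numLeaves, depths] at h
  | node l r =>
    have hl := numLeaves_pos l
    have hr := numLeaves_pos r
    simp at h
    rcases (by omega : l.numLeaves = 1 ∧ r.numLeaves = 3 ∨
        l.numLeaves = 2 ∧ r.numLeaves = 2 ∨ l.numLeaves = 3 ∧ r.numLeaves = 1)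
      with ⟨h1, h2⟩ | ⟨h1, h2⟩ | ⟨h1, h2⟩
    · rcases eq_of_numLeaves_three h2 with h2 | h2 <;>
        rw [eq_of_numLeaves_one h1, h2] <;> tauto
    · rw [eq_of_numLeaves_two h1, eq_of_numLeaves_two h2]; tauto
    · rcases eq_of_numLeaves_three h1 with h1 | h1 <;>
        rw [eq_of_numLeaves_one h2, h1] <;> tauto

end BTree

/-- failure of Knuth's splitting-point monotonicity for `a = 0.6`,
weights `(8,1,9,6)`: the optimal splits are `3` for the prefix `(8,1,9)`,
`4` for the suffix `(1,9,6)` (which starts at position 2, whence the `1 +`),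
and `2` for the whole, which does not lie between `3` and `4`. -/
theorem stmt4 :
    (∀ T : BTree, T.numLeaves = 3 →
        (∀ T2 : BTree, T2.numLeaves = 3 → cost 0.6 [8, 1, 9] T2 ≤ cost 0.6 [8, 1, 9] T) →
        T.splitPoint = 3) ∧
    (∀ T : BTree, T.numLeaves = 3 →
        (∀ T2 : BTree, T2.numLeaves = 3 → cost 0.6 [1, 9, 6] T2 ≤ cost 0.6 [1, 9, 6] T) →
        1 + T.splitPoint = 4) ∧
    (∀ T : BTree, T.numLeaves = 4 →
        (∀ T2 : BTree, T2.numLeaves = 4 →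
          cost 0.6 [8, 1, 9, 6] T2 ≤ cost 0.6 [8, 1, 9, 6] T) →
        T.splitPoint = 2) ∧
    ¬ (3 ≤ 2 ∧ (2 : ℕ) ≤ 4) := by
  refine ⟨?_, ?_, ?_, by omega⟩
  · intro T hT hopt
    rcases BTree.eq_of_numLeaves_three hT with h | h
    · exfalso
      have := hopt (.node (.node .leaf .leaf) .leaf) rfl
      rw [h] at this
      norm_num [cost, BTree.depths] at this
    · rw [h]; rfl
  · intro T hT hopt
    rcases BTree.eq_of_numLeaves_three hT with h | h
    · exfalso
      have := hopt (.node (.node .leaf .leaf) .leaf) rfl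
      rw [h] at this
      norm_num [cost, BTree.depths] at this
    · rw [h]; rfl
  · intro T hT hopt
    have key := hopt (.node .leaf (.node (.node .leaf .leaf) .leaf)) rfl
    rcases BTree.eq_of_numLeaves_four hT with h | h | h | h | h <;>
      rw [h] at key ⊢ <;>
      first
        | rfl
        | (exfalso; norm_num [cost, BTree.depths] at key)
end

section
/- If l : Fin n → ℕ is the leaf-depth sequence of an alphabetic binary tree with Σ 2^{-l(i)} < 1, then there exists an alphabetic binary tree with leaf-depth sequence l' satisfying l'(i) ≤ l(i) for all i and Σ 2^{-l'(i)} = 1 (obtained by removing redundant internal nodes with only one child). -/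
open Real Finset

/-- Remove all single-child nodes. -/
def PTree.compress : PTree → BTree
  | .leaf => .leaf
  | .node1 t => t.compress
  | .node2 l r => .node l.compress r.compress

lemma compress_forall₂ (t : PTree) :
    List.Forall₂ (· ≤ ·) t.compress.depths t.depths := by
  induction t with
  | leaf => simp [PTree.compress, PTree.depths, BTree.depths]
  | node1 t ih =>
      simp only [PTree.compress, PTree.depths, List.forall₂_map_right_iff]
      exact ih.imp (fun {a b} h => le_trans h (Nat.le_succ _))
  | node2 l r ihl ihr =>
      simp only [PTree.compress, PTree.depths, BTree.depths,
        List.forall₂_map_right_iff, List.forall₂_map_left_iff]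
      exact (List.rel_append ihl ihr).imp (fun {a b} h => Nat.add_le_add_right h 1)

lemma kraft_eq_one (t : BTree) :
    (t.depths.map (fun d => ((2 : ℝ) ^ d)⁻¹)).sum = 1 := by
  induction t with
  | leaf => simp [BTree.depths]
  | node l r ihl ihr =>
      simp only [BTree.depths, List.map_map, List.map_append, List.sum_append]
      have key : ∀ (L : List ℕ),
          (L.map ((fun d => ((2:ℝ)^d)⁻¹) ∘ (· + 1))).sum
            = (1/2) * (L.map (fun d => ((2:ℝ)^d)⁻¹)).sum := by
        intro L
        induction L with
        | nil => simp
        | cons a t ih =>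
            simp only [List.map_cons, List.sum_cons, ih, Function.comp]
            rw [pow_succ, mul_inv]
            ring
      rw [key, key, ihl, ihr]
      norm_num

/-- cleanup. If a (possibly single-child-node) alphabetic tree has
leaf depths `l` with `∑ 2^{-l(i)} < 1`, there is an alphabetic binary tree with
depths `l' ≤ l` pointwise and `∑ 2^{-l'(i)} = 1`. -/
theorem stmt8 (n : ℕ) (l : Fin n → ℕ) (T : PTree) (hT : T.depths = List.ofFn l)
    (hk : ∑ i, ((2 : ℝ) ^ l i)⁻¹ < 1) :
    ∃ (T' : BTree) (l' : Fin n → ℕ), T'.depths = List.ofFn l' ∧ (∀ i, l' i ≤ l i) ∧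
      ∑ i, ((2 : ℝ) ^ l' i)⁻¹ = 1 := by
  have hf := compress_forall₂ T
  rw [hT] at hf
  have hlen : T.compress.depths.length = n := by
    have := hf.length_eq
    simpa using this
  set l' : Fin n → ℕ := fun i => T.compress.depths.get (Fin.cast hlen.symm i) with hl'
  have hd : T.compress.depths = List.ofFn l' := by
    apply List.ext_get (by simp [hlen])
    intro i h1 h2
    simp [hl', List.get_ofFn, Fin.cast]
  refine ⟨T.compress, l', hd, ?_, ?_⟩
  · intro i
    have := List.forall₂_iff_get.mp hf
    have h := this.2 i (by rw [hlen]; exact i.2) (by simp)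
    simpa [hl'] using h
  · have hk := kraft_eq_one T.compress
    rw [hd, List.map_ofFn, List.sum_ofFn] at hk
    simpa using hk
end

section
/- Campbell's bounds: let a > 1/2, a ≠ 1, α = 1/(1 + log₂ a), and let w be a probability vector with w(i) > 0. Define the Shannon-like lengths l^s(i) = ⌈ -α·log₂ w(i) + log₂ Σ_j w(j)^α ⌉. Then l^s satisfies the Kraft inequality Σ 2^{-l^s(i)} ≤ 1 and H_α(w) ≤ L_a(w, l^s) < 1 + H_α(w), where L_a(w,l) = log_a Σ_i w(i)·a^{l(i)} and H_α(w) = (1/(1-α))·log₂ Σ_i w(i)^α is the Rényi entropy of order α. -/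
open Real Finset

private lemma two_rpow_mul_logb (t x : ℝ) (hx : 0 < x) :
    (2:ℝ) ^ (t * Real.logb 2 x) = x ^ t := by
  rw [mul_comm, Real.rpow_mul (by norm_num : (0:ℝ) ≤ 2),
    Real.rpow_logb two_pos (by norm_num) hx]

private lemma logb_rpow' (t x : ℝ) (hx : 0 < x) :
    Real.logb 2 (x ^ t) = t * Real.logb 2 x := by
  rw [Real.logb, Real.log_rpow hx, Real.logb]; ring

/-- Campbell's bounds. The Shannon-like lengths satisfy the Kraft
inequality and `H_α(w) ≤ L_a(w, lˢ) < 1 + H_α(w)`. -/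
theorem stmt9 (n : ℕ) (hn : 0 < n) (a : ℝ) (ha : 1 / 2 < a) (ha1 : a ≠ 1)
    (w : Fin n → ℝ) (hw : ∀ i, 0 < w i) (hsum : ∑ i, w i = 1)
    (α : ℝ) (hα : α = 1 / (1 + Real.logb 2 a))
    (ls : Fin n → ℕ)
    (hls : ∀ i, ls i =
      (⌈-α * Real.logb 2 (w i) + Real.logb 2 (∑ j, w j ^ α)⌉ : ℤ).toNat) :
    (∑ i, ((2 : ℝ) ^ ls i)⁻¹ ≤ 1) ∧
    (1 / (1 - α)) * Real.logb 2 (∑ i, w i ^ α) ≤ La a w ls ∧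
    La a w ls < 1 + (1 / (1 - α)) * Real.logb 2 (∑ i, w i ^ α) := by
  have ha0 : (0:ℝ) < a := by linarith
  have hl2 : Real.log 2 ≠ 0 := ne_of_gt (Real.log_pos one_lt_two)
  have hla : Real.log a ≠ 0 := by
    intro h
    rcases Real.log_eq_zero.mp h with h | h | h <;> simp_all <;> linarith
  haveI : Nonempty (Fin n) := ⟨⟨0, hn⟩⟩
  set β := Real.logb 2 a with hβdef
  have hβ0 : β ≠ 0 := div_ne_zero hla hl2
  have h1β : 0 < 1 + β := by
    have h2 : Real.logb 2 (1/2) < Real.logb 2 a :=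
      Real.logb_lt_logb one_lt_two (by norm_num) ha
    have h3 : Real.logb 2 (1/2) = -1 := by
      rw [one_div, Real.logb_inv, Real.logb_self_eq_one] <;> norm_num
    rw [h3, ← hβdef] at h2; linarith
  have hα0 : 0 < α := by rw [hα]; positivity
  have hα1 : α * (1 + β) = 1 := by rw [hα]; field_simp
  have hαβ : α * β = 1 - α := by linear_combination hα1
  have h1α : 1 - α ≠ 0 := by rw [← hαβ]; exact mul_ne_zero (ne_of_gt hα0) hβ0
  set S := ∑ i, w i ^ α with hSdef
  have hS0 : 0 < S :=
    Finset.sum_pos (fun i _ => Real.rpow_pos_of_pos (hw i) α) Finset.univ_nonempty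
  -- ceiling bounds
  have hls' : ∀ i, ((ls i : ℝ)) = (⌈-α * Real.logb 2 (w i) + Real.logb 2 S⌉ : ℤ) := by
    intro i
    have hc0 : (0:ℝ) ≤ -α * Real.logb 2 (w i) + Real.logb 2 S := by
      have h1 : w i ^ α ≤ S :=
        Finset.single_le_sum (fun j _ => (Real.rpow_pos_of_pos (hw j) α).le)
          (Finset.mem_univ i)
      have h2 : Real.logb 2 (w i ^ α) ≤ Real.logb 2 S :=
        (Real.logb_le_logb one_lt_two (Real.rpow_pos_of_pos (hw i) α) hS0).mpr h1
      rw [logb_rpow' α (w i) (hw i)] at h2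
      linarith
    have h0 : (0:ℤ) ≤ ⌈-α * Real.logb 2 (w i) + Real.logb 2 S⌉ := Int.ceil_nonneg hc0
    rw [hls i]
    exact_mod_cast congrArg (Int.cast : ℤ → ℝ) (Int.toNat_of_nonneg h0)
  have hcle : ∀ i, -α * Real.logb 2 (w i) + Real.logb 2 S ≤ (ls i : ℝ) := by
    intro i; rw [hls' i]; exact Int.le_ceil _
  have hclt : ∀ i, (ls i : ℝ) < -α * Real.logb 2 (w i) + Real.logb 2 S + 1 := by
    intro i; rw [hls' i]; exact Int.ceil_lt_add_one _
  -- key term identity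
  have hterm : ∀ i : Fin n,
      w i * (2:ℝ) ^ (β * (-α * Real.logb 2 (w i) + Real.logb 2 S)) = S ^ β * w i ^ α := by
    intro i
    have e1 : β * (-α * Real.logb 2 (w i) + Real.logb 2 S)
        = (α - 1) * Real.logb 2 (w i) + β * Real.logb 2 S := by
      linear_combination (-(Real.logb 2 (w i))) * hαβ
    rw [e1, Real.rpow_add two_pos, two_rpow_mul_logb _ _ (hw i),
      two_rpow_mul_logb _ _ hS0]
    have e2 : w i * w i ^ (α - 1) = w i ^ α := by
      nth_rewrite 1 [← Real.rpow_one (w i)]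
      rw [← Real.rpow_add (hw i)]; ring_nf
    calc w i * (w i ^ (α - 1) * S ^ β) = (w i * w i ^ (α - 1)) * S ^ β := by ring
      _ = S ^ β * w i ^ α := by rw [e2]; ring
  have hsumc : ∑ i, S ^ β * w i ^ α = S ^ (1 + β) := by
    rw [← Finset.mul_sum, ← hSdef, Real.rpow_add hS0, Real.rpow_one]; ring
  -- Kraft inequality
  have kraft : ∑ i, ((2 : ℝ) ^ ls i)⁻¹ ≤ 1 := by
    have hbd : ∀ i : Fin n, ((2 : ℝ) ^ ls i)⁻¹ ≤ w i ^ α / S := by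
      intro i
      have h1 : ((2:ℝ) ^ ls i)⁻¹ = (2:ℝ) ^ (-(ls i : ℝ)) := by
        rw [Real.rpow_neg (by norm_num), Real.rpow_natCast]
      have h2 : (2:ℝ) ^ (-(ls i:ℝ))
          ≤ (2:ℝ) ^ (-(-α * Real.logb 2 (w i) + Real.logb 2 S)) :=
        Real.rpow_le_rpow_of_exponent_le one_le_two (neg_le_neg (hcle i))
      have h3 : (2:ℝ) ^ (-(-α * Real.logb 2 (w i) + Real.logb 2 S))
          = w i ^ α / S := by
        have e : -(-α * Real.logb 2 (w i) + Real.logb 2 S)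
            = α * Real.logb 2 (w i) + (-1) * Real.logb 2 S := by ring
        rw [e, Real.rpow_add two_pos, two_rpow_mul_logb _ _ (hw i),
          two_rpow_mul_logb _ _ hS0, Real.rpow_neg_one]
        ring
      rw [h1]; rw [h3] at h2; exact h2
    calc ∑ i, ((2 : ℝ) ^ ls i)⁻¹ ≤ ∑ i, w i ^ α / S := Finset.sum_le_sum fun i _ => hbd i
      _ = S / S := by rw [← Finset.sum_div]
      _ = 1 := div_self hS0.ne'
  -- rewrite La
  have hpow : ∀ m : ℕ, a ^ m = (2:ℝ) ^ (β * (m:ℝ)) := by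
    intro m
    rw [Real.rpow_mul (by norm_num : (0:ℝ) ≤ 2), Real.rpow_natCast,
      Real.rpow_logb two_pos (by norm_num) ha0]
  have hT0 : 0 < ∑ i, w i * (2:ℝ) ^ (β * (ls i : ℝ)) :=
    Finset.sum_pos (fun i _ => mul_pos (hw i) (Real.rpow_pos_of_pos two_pos _))
      Finset.univ_nonempty
  have hLaT : La a w ls = Real.logb 2 (∑ i, w i * (2:ℝ) ^ (β * (ls i : ℝ))) / β := by
    unfold La
    have e : (∑ i, w i * a ^ ls i) = ∑ i, w i * (2:ℝ) ^ (β * (ls i : ℝ)) :=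
      Finset.sum_congr rfl fun i _ => by rw [hpow]
    rw [e, hβdef]
    simp only [Real.logb]
    field_simp
  set T := ∑ i, w i * (2:ℝ) ^ (β * (ls i : ℝ)) with hTdef
  -- the two bounds on T, by sign of β
  have hSb0 : 0 < S ^ (1 + β) := Real.rpow_pos_of_pos hS0 _
  have key1 : β * ((1 / (1 - α)) * Real.logb 2 S) = Real.logb 2 (S ^ (1 + β)) := by
    rw [logb_rpow' _ _ hS0]
    have hfr : β * (1 / (1 - α)) = 1 + β := by
      field_simp
      linear_combination hα1
    linear_combination Real.logb 2 S * hfr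
  refine ⟨kraft, ?_, ?_⟩
  · -- lower bound
    rw [hLaT]
    rcases lt_or_gt_of_ne hβ0 with hβneg | hβpos
    · rw [le_div_iff_of_neg hβneg]
      have hTle : T ≤ S ^ (1 + β) := by
        rw [← hsumc]
        refine Finset.sum_le_sum fun i _ => ?_
        rw [← hterm i]
        exact mul_le_mul_of_nonneg_left
          (Real.rpow_le_rpow_of_exponent_le one_le_two
            (mul_le_mul_of_nonpos_left (hcle i) hβneg.le)) (hw i).le
      have := (Real.logb_le_logb one_lt_two hT0 hSb0).mpr hTle
      calc Real.logb 2 T ≤ Real.logb 2 (S ^ (1 + β)) := this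
        _ = 1 / (1 - α) * Real.logb 2 S * β := by rw [← key1]; ring
    · rw [le_div_iff₀ hβpos]
      have hTge : S ^ (1 + β) ≤ T := by
        rw [← hsumc]
        refine Finset.sum_le_sum fun i _ => ?_
        rw [← hterm i]
        exact mul_le_mul_of_nonneg_left
          (Real.rpow_le_rpow_of_exponent_le one_le_two
            (mul_le_mul_of_nonneg_left (hcle i) hβpos.le)) (hw i).le
      have := (Real.logb_le_logb one_lt_two hSb0 hT0).mpr hTge
      calc 1 / (1 - α) * Real.logb 2 S * β = Real.logb 2 (S ^ (1 + β)) := by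
            rw [← key1]; ring
        _ ≤ Real.logb 2 T := this
  · -- upper bound
    rw [hLaT]
    have hlogmul : Real.logb 2 (S ^ (1 + β) * 2 ^ β)
        = Real.logb 2 (S ^ (1 + β)) + β := by
      rw [Real.logb_mul hSb0.ne' (Real.rpow_pos_of_pos two_pos β).ne',
        Real.logb_rpow two_pos (by norm_num)]
    have hprodpos : 0 < S ^ (1 + β) * (2:ℝ) ^ β :=
      mul_pos hSb0 (Real.rpow_pos_of_pos two_pos β)
    rcases lt_or_gt_of_ne hβ0 with hβneg | hβpos
    · rw [div_lt_iff_of_neg hβneg]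
      have hTgt : S ^ (1 + β) * 2 ^ β < T := by
        rw [← hsumc, Finset.sum_mul]
        refine Finset.sum_lt_sum_of_nonempty Finset.univ_nonempty fun i _ => ?_
        rw [← hterm i, mul_assoc, ← Real.rpow_add two_pos]
        refine mul_lt_mul_of_pos_left ?_ (hw i)
        exact Real.rpow_lt_rpow_of_exponent_lt one_lt_two (by nlinarith [hclt i])
      have h4 := Real.logb_lt_logb one_lt_two hprodpos hTgt
      rw [hlogmul] at h4
      have : (1 + 1 / (1 - α) * Real.logb 2 S) * β
          = β + Real.logb 2 (S ^ (1 + β)) := by rw [← key1]; ring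
      linarith
    · rw [div_lt_iff₀ hβpos]
      have hTlt : T < S ^ (1 + β) * 2 ^ β := by
        rw [← hsumc, Finset.sum_mul]
        refine Finset.sum_lt_sum_of_nonempty Finset.univ_nonempty fun i _ => ?_
        rw [← hterm i, mul_assoc, ← Real.rpow_add two_pos]
        refine mul_lt_mul_of_pos_left ?_ (hw i)
        exact Real.rpow_lt_rpow_of_exponent_lt one_lt_two (by nlinarith [hclt i])
      have h4 := Real.logb_lt_logb one_lt_two hT0 hTlt
      rw [hlogmul] at h4
      have : (1 + 1 / (1 - α) * Real.logb 2 S) * β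
          = β + Real.logb 2 (S ^ (1 + β)) := by rw [← key1]; ring
      linarith
end

section
/- For a > 1/2, a ≠ 1, and probability vector w with positive entries, the minimum of L_a(w,l) over all length vectors satisfying the Kraft inequality Σ 2^{-l(i)} ≤ 1 (the Huffman-like optimum L_a^h(w)) satisfies H_α(w) ≤ L_a^h(w), where α = 1/(1 + log₂ a). -/
open Real Finset

/-!
Write `a = 2 ^ t`, so that `α = 1 / (1 + t)` and `(2a) ^ α = 2`. With the Kraft weights
`q i = 2 ^ (-l i)` and the points `x i = w i (2a) ^ (l i)` one has `q i x i = w i a ^ (l i)` and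
`q i x i ^ α = w i ^ α`. Weighted Hölder (Jensen for `x ↦ x ^ α`) together with `∑ q i ≤ 1` then
compares `∑ w i ^ α` with `(∑ w i a ^ (l i)) ^ α`, in a direction that depends on whether `α < 1`;
dividing the logarithms by `1 - α`, whose sign changes at the same place, gives one inequality.
-/

section WeightedPowerMean

variable {ι : Type*} (s : Finset ι) {q x : ι → ℝ} {α : ℝ}

theorem Real.sum_mul_rpow_le_rpow_sum_mul (hq : ∀ i, 0 ≤ q i) (hx : ∀ i, 0 ≤ x i)
    (hq1 : ∑ i ∈ s, q i ≤ 1) (hα0 : 0 < α) (hα1 : α ≤ 1) :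
    ∑ i ∈ s, q i * x i ^ α ≤ (∑ i ∈ s, q i * x i) ^ α := by
  have holder := inner_le_weight_mul_Lp_of_nonneg s ((one_le_inv₀ hα0).2 hα1) q
    (fun i => x i ^ α) hq (fun i => rpow_nonneg (hx i) α)
  simp only [inv_inv, ← rpow_mul (hx _), mul_inv_cancel₀ hα0.ne', rpow_one] at holder
  have hK : (∑ i ∈ s, q i) ^ (1 - α) ≤ 1 :=
    rpow_le_one (sum_nonneg fun i _ => hq i) hq1 (by linarith)
  exact holder.trans (mul_le_of_le_one_left
    (rpow_nonneg (sum_nonneg fun i _ => mul_nonneg (hq i) (hx i)) α) hK)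

theorem Real.rpow_sum_mul_le_sum_mul_rpow (hq : ∀ i, 0 ≤ q i) (hx : ∀ i, 0 ≤ x i)
    (hq1 : ∑ i ∈ s, q i ≤ 1) (hα : 1 ≤ α) :
    (∑ i ∈ s, q i * x i) ^ α ≤ ∑ i ∈ s, q i * x i ^ α := by
  have holder := inner_le_weight_mul_Lp_of_nonneg s hα q x hq hx
  have hK : (∑ i ∈ s, q i) ^ (1 - α⁻¹) ≤ 1 :=
    rpow_le_one (sum_nonneg fun i _ => hq i) hq1 (sub_nonneg.2 (inv_le_one_of_one_le₀ hα))
  have hsum : 0 ≤ ∑ i ∈ s, q i * x i ^ α :=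
    sum_nonneg fun i _ => mul_nonneg (hq i) (rpow_nonneg (hx i) α)
  calc (∑ i ∈ s, q i * x i) ^ α ≤ ((∑ i ∈ s, q i * x i ^ α) ^ α⁻¹) ^ α := by
        gcongr
        · exact sum_nonneg fun i _ => mul_nonneg (hq i) (hx i)
        · exact holder.trans (mul_le_of_le_one_left (by positivity) hK)
    _ = ∑ i ∈ s, q i * x i ^ α := by
        rw [← rpow_mul hsum, inv_mul_cancel₀ (by linarith), rpow_one]

end WeightedPowerMean

section KraftLengths

variable {a α : ℝ}

theorem one_add_logb_two_pos (ha : 1 / 2 < a) : 0 < 1 + logb 2 a := by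
  have h : logb 2 (2 * a) = 1 + logb 2 a := by
    rw [logb_mul two_ne_zero (by positivity), logb_self_eq_one one_lt_two]
  rw [← h]
  exact logb_pos one_lt_two (by linarith)

theorem two_mul_rpow_eq_two (ha : 0 < a) (hα : α * (1 + logb 2 a) = 1) :
    (2 * a) ^ α = 2 := by
  have h2a : 2 * a = (2 : ℝ) ^ (1 + logb 2 a) := by
    rw [rpow_add two_pos, rpow_one, rpow_logb two_pos (by norm_num) ha]
  rw [h2a, ← rpow_mul zero_le_two, mul_comm, hα, rpow_one]

theorem inv_two_pow_mul_mul_two_mul_pow (y : ℝ) (k : ℕ) :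
    ((2 : ℝ) ^ k)⁻¹ * (y * (2 * a) ^ k) = y * a ^ k := by
  rw [mul_pow]
  field_simp

theorem inv_two_pow_mul_rpow_mul_two_mul_pow {y : ℝ} (hy : 0 ≤ y) (k : ℕ) (ha : 0 < a)
    (hα : α * (1 + logb 2 a) = 1) :
    ((2 : ℝ) ^ k)⁻¹ * (y * (2 * a) ^ k) ^ α = y ^ α := by
  rw [mul_rpow hy (by positivity), ← rpow_natCast (2 * a) k,
    ← rpow_mul (by positivity), mul_comm (k : ℝ), rpow_mul (by positivity),
    two_mul_rpow_eq_two ha hα, rpow_natCast]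
  field_simp

theorem logb_eq_one_div_one_sub_mul_mul_logb_two (ha : 0 < a) (ha1 : a ≠ 1)
    (hα : α * (1 + logb 2 a) = 1) (y : ℝ) :
    logb a y = 1 / (1 - α) * (α * logb 2 y) := by
  have hα0 : α ≠ 0 := left_ne_zero_of_mul_eq_one hα
  have hloga : log a ≠ 0 := log_ne_zero_of_pos_of_ne_one ha ha1
  rw [show 1 - α = α * logb 2 a by linear_combination -hα]
  field_simp
  simp only [logb]
  field_simp

variable {ι : Type*} [Fintype ι] {w : ι → ℝ} {l : ι → ℕ}

theorem sum_rpow_le_rpow_sum_mul_pow_of_kraft (hw : ∀ i, 0 ≤ w i)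
    (hkraft : ∑ i, ((2 : ℝ) ^ l i)⁻¹ ≤ 1) (ha : 0 < a) (hα : α * (1 + logb 2 a) = 1)
    (hα0 : 0 < α) (hα1 : α ≤ 1) :
    ∑ i, w i ^ α ≤ (∑ i, w i * a ^ l i) ^ α := by
  simpa only [inv_two_pow_mul_mul_two_mul_pow, inv_two_pow_mul_rpow_mul_two_mul_pow (hw _) _ ha hα]
    using sum_mul_rpow_le_rpow_sum_mul Finset.univ (x := fun i => w i * (2 * a) ^ l i)
      (fun i => by positivity) (fun i => mul_nonneg (hw i) (by positivity)) hkraft hα0 hα1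

theorem rpow_sum_mul_pow_le_sum_rpow_of_kraft (hw : ∀ i, 0 ≤ w i)
    (hkraft : ∑ i, ((2 : ℝ) ^ l i)⁻¹ ≤ 1) (ha : 0 < a) (hα : α * (1 + logb 2 a) = 1)
    (hα1 : 1 ≤ α) :
    (∑ i, w i * a ^ l i) ^ α ≤ ∑ i, w i ^ α := by
  simpa only [inv_two_pow_mul_mul_two_mul_pow, inv_two_pow_mul_rpow_mul_two_mul_pow (hw _) _ ha hα]
    using rpow_sum_mul_le_sum_mul_rpow Finset.univ (x := fun i => w i * (2 * a) ^ l i)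
      (fun i => by positivity) (fun i => mul_nonneg (hw i) (by positivity)) hkraft hα1

end KraftLengths

theorem stmt10_general (n : ℕ) (a : ℝ) (ha : 1 / 2 < a) (ha1 : a ≠ 1)
    (w : Fin n → ℝ) (hw : ∀ i, 0 < w i)
    (α : ℝ) (hα : α = 1 / (1 + Real.logb 2 a)) :
    ∀ l : Fin n → ℕ, (∑ i, ((2 : ℝ) ^ l i)⁻¹ ≤ 1) →
      (1 / (1 - α)) * Real.logb 2 (∑ i, w i ^ α) ≤ La a w l := by
  intro l hkraft
  rcases isEmpty_or_nonempty (Fin n) with _ | _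
  · simp [La]
  have ha0 : 0 < a := by linarith
  have hα' : α * (1 + logb 2 a) = 1 := by
    rw [hα, one_div_mul_cancel (one_add_logb_two_pos ha).ne']
  have hα0 : 0 < α := by
    rw [hα]
    exact one_div_pos.2 (one_add_logb_two_pos ha)
  have hw0 : ∀ i, 0 ≤ w i := fun i => (hw i).le
  have hS : 0 < ∑ i, w i * a ^ l i := sum_pos (fun i _ => by have := hw i; positivity) univ_nonempty
  have hR : 0 < ∑ i, w i ^ α := sum_pos (fun i _ => rpow_pos_of_pos (hw i) α) univ_nonempty
  rw [La, logb_eq_one_div_one_sub_mul_mul_logb_two ha0 ha1 hα',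
    ← logb_rpow_eq_mul_logb_of_pos hS]
  rcases le_total α 1 with hα1 | hα1
  · exact mul_le_mul_of_nonneg_left (logb_le_logb_of_le one_lt_two hR
      (sum_rpow_le_rpow_sum_mul_pow_of_kraft hw0 hkraft ha0 hα' hα0 hα1))
      (one_div_nonneg.2 (sub_nonneg.2 hα1))
  · exact mul_le_mul_of_nonpos_left (logb_le_logb_of_le one_lt_two (by positivity)
      (rpow_sum_mul_pow_le_sum_rpow_of_kraft hw0 hkraft ha0 hα' hα1))
      (one_div_nonpos.2 (sub_nonpos.2 hα1))

/-- `H_α(w)` lower-bounds `L_a(w,l)` for every Kraft-feasible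
length vector, hence lower-bounds the Huffman-like optimum `L_a^h(w)`. -/
theorem stmt10 (n : ℕ) (a : ℝ) (ha : 1 / 2 < a) (ha1 : a ≠ 1)
    (w : Fin n → ℝ) (hw : ∀ i, 0 < w i) (hsum : ∑ i, w i = 1)
    (α : ℝ) (hα : α = 1 / (1 + Real.logb 2 a)) :
    ∀ l : Fin n → ℕ, (∑ i, ((2 : ℝ) ^ l i)⁻¹ ≤ 1) →
      (1 / (1 - α)) * Real.logb 2 (∑ i, w i ^ α) ≤ La a w l :=
  stmt10_general n a ha ha1 w hw α hα
end

section
/- Approximation bound chain (Huffman-based): for a ∈ (1/2,1) and probability vector w with positive entries, H_α(w) ≤ L_a^h(w) ≤ L_a^ā(w) ≤ L_a^h̃(w) < 1 + L_a^h(w) < 2 + H_α(w), where α = 1/(1+log₂ a), L_a^h(w) is the optimal cost over all Kraft-feasible length vectors, L_a^ā(w) is the optimal cost over alphabetic trees, and L_a^h̃(w) is the cost of the alphabetic code produced by applying the minimal-point adjustment and redundant-node removal to an optimal Huffman-like length vector. -/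
open Real Finset

lemma kraft_btree : ∀ t : BTree, ((t.depths).map (fun d => ((2:ℝ)^d)⁻¹)).sum = 1 := by
  intro t
  induction t with
  | leaf => simp [BTree.depths]
  | node l r ihl ihr =>
    simp only [BTree.depths, List.map_append, List.map_map, List.sum_append]
    have h : ((fun d => ((2:ℝ)^d)⁻¹) ∘ (· + 1)) = fun d => 2⁻¹ * ((2:ℝ)^d)⁻¹ := by
      funext d; simp [pow_succ, mul_inv, mul_comm]
    rw [h, List.sum_map_mul_left, List.sum_map_mul_left, ihl, ihr]
    norm_num

lemma list_sum_range (n : ℕ) (g : ℕ → ℝ) :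
    ((List.range n).map g).sum = ∑ i ∈ Finset.range n, g i := by
  induction n with
  | zero => simp
  | succ m ih => rw [List.range_succ, Finset.sum_range_succ, List.map_append, List.sum_append, ih]; simp

lemma kraft_of_tree (n : ℕ) (lT : ℕ → ℕ) (T : BTree) (hT : T.depths = (List.range n).map lT) :
    ∑ i ∈ Finset.range n, ((2:ℝ) ^ lT i)⁻¹ = 1 := by
  have := kraft_btree T
  rw [hT, List.map_map, list_sum_range] at this
  simpa using this

lemma rev_holder (s : Finset ℕ) (hs : s.Nonempty) (u v : ℕ → ℝ)
    (hu : ∀ i ∈ s, 0 ≤ u i) (hv : ∀ i ∈ s, 0 < v i) {α : ℝ} (hα : 1 ≤ α) :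
    (∑ i ∈ s, u i) ^ α * (∑ i ∈ s, v i) ^ (1 - α) ≤ ∑ i ∈ s, (u i) ^ α * (v i) ^ (1 - α) := by
  set V : ℝ := ∑ i ∈ s, v i with hV
  have hVpos : 0 < V := Finset.sum_pos hv hs
  set U : ℝ := ∑ i ∈ s, u i with hU
  have hUnn : 0 ≤ U := Finset.sum_nonneg hu
  have hmem : ∀ i ∈ s, u i / v i ∈ Set.Ici (0:ℝ) := fun i hi =>
    div_nonneg (hu i hi) (hv i hi).le
  have h1 : ∑ i ∈ s, v i / V = 1 := by
    rw [← Finset.sum_div]; exact div_self hVpos.ne'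
  have jensen := (convexOn_rpow hα).map_sum_le
    (fun i hi => div_nonneg (hv i hi).le hVpos.le) h1 hmem
  simp only [smul_eq_mul] at jensen
  have hsum : ∑ i ∈ s, v i / V * (u i / v i) = U / V := by
    rw [hU, Finset.sum_div]
    refine Finset.sum_congr rfl fun i hi => ?_
    have hvi : v i ≠ 0 := (hv i hi).ne'
    have hV0 : V ≠ 0 := hVpos.ne'
    field_simp
  rw [hsum] at jensen
  -- multiply by V
  have key : V * ((U / V) ^ α) ≤ V * ∑ i ∈ s, v i / V * (u i / v i) ^ α :=
    mul_le_mul_of_nonneg_left jensen hVpos.le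
  have hL : V * ((U / V) ^ α) = U ^ α * V ^ (1 - α) := by
    rw [Real.div_rpow hUnn hVpos.le, Real.rpow_sub hVpos, Real.rpow_one]
    field_simp
  have hR : V * ∑ i ∈ s, v i / V * (u i / v i) ^ α
      = ∑ i ∈ s, (u i) ^ α * (v i) ^ (1 - α) := by
    rw [Finset.mul_sum]
    refine Finset.sum_congr rfl fun i hi => ?_
    have hvi : v i ≠ 0 := (hv i hi).ne'
    have hV0 : V ≠ 0 := hVpos.ne'
    rw [Real.div_rpow (hu i hi) (hv i hi).le, Real.rpow_sub (hv i hi), Real.rpow_one,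
      ← mul_assoc, mul_comm V (v i / V), div_mul_cancel₀ _ hV0]
    ring
  rw [hL, hR] at key
  exact key

lemma base_facts (a : ℝ) (ha : 1 / 2 < a) (ha1 : a < 1) :
    0 < a ∧ Real.logb 2 a < 0 ∧ -1 < Real.logb 2 a ∧ a = 2 ^ Real.logb 2 a ∧
      Real.log a = Real.logb 2 a * Real.log 2 := by
  have ha0 : 0 < a := by linarith
  have h2 : (1:ℝ) < 2 := by norm_num
  refine ⟨ha0, Real.logb_neg h2 ha0 ha1, ?_, ?_, ?_⟩
  · have : Real.logb 2 (1/2) < Real.logb 2 a := Real.logb_lt_logb h2 (by norm_num) ha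
    have h12 : Real.logb 2 (1/2 : ℝ) = -1 := by
      rw [one_div, Real.logb_inv, Real.logb_self_eq_one h2]
    linarith [this, h12.symm.le]
  · exact (Real.rpow_logb (by norm_num) (by norm_num) ha0).symm
  · rw [Real.logb, div_mul_cancel₀]
    exact Real.log_ne_zero_of_pos_of_ne_one (by norm_num) (by norm_num)

lemma apow_eq (a : ℝ) (ha : 1 / 2 < a) (ha1 : a < 1) (m : ℕ) :
    a ^ m = (2:ℝ) ^ (Real.logb 2 a * m) := by
  obtain ⟨ha0, _, _, h2c, _⟩ := base_facts a ha ha1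
  nth_rewrite 1 [h2c]
  rw [← Real.rpow_natCast ((2:ℝ) ^ Real.logb 2 a) m, ← Real.rpow_mul (by norm_num)]

lemma campbell_lb (n : ℕ) (hn : 0 < n) (a : ℝ) (ha : 1 / 2 < a) (ha1 : a < 1)
    (w : ℕ → ℝ) (hw : ∀ i < n, 0 < w i) (α : ℝ) (hα : α = 1 / (1 + Real.logb 2 a))
    (l : ℕ → ℕ) (hK : ∑ i ∈ Finset.range n, ((2:ℝ) ^ l i)⁻¹ ≤ 1) :
    (1 / (1 - α)) * Real.logb 2 (∑ i ∈ Finset.range n, w i ^ α) ≤ LaN a n w l := by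
  obtain ⟨ha0, hc0, hcm, h2c, hloga⟩ := base_facts a ha ha1
  set c : ℝ := Real.logb 2 a with hc
  have h1c : 0 < 1 + c := by linarith
  have hα1 : 1 < α := by
    rw [hα, lt_div_iff₀ h1c]; linarith
  have hid : α * c = 1 - α := by
    have : α * (1 + c) = 1 := by rw [hα]; field_simp
    linarith [this]
  have hlog2 : 0 < Real.log 2 := Real.log_pos (by norm_num)
  -- sums
  set U : ℝ := ∑ i ∈ Finset.range n, w i * a ^ l i with hU
  set V : ℝ := ∑ i ∈ Finset.range n, ((2:ℝ) ^ l i)⁻¹ with hV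
  set W : ℝ := ∑ i ∈ Finset.range n, w i ^ α with hW
  have hne : (Finset.range n).Nonempty := Finset.nonempty_range_iff.mpr hn.ne'
  have hUpos : 0 < U := Finset.sum_pos
    (fun i hi => mul_pos (hw i (Finset.mem_range.mp hi)) (pow_pos ha0 _)) hne
  have hVpos : 0 < V := Finset.sum_pos (fun i _ => by positivity) hne
  have hWpos : 0 < W := Finset.sum_pos
    (fun i hi => Real.rpow_pos_of_pos (hw i (Finset.mem_range.mp hi)) _) hne
  -- reverse Hölder
  have hrh := rev_holder (Finset.range n) hne (fun i => w i * a ^ l i)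
    (fun i => ((2:ℝ) ^ l i)⁻¹)
    (fun i hi => (mul_pos (hw i (Finset.mem_range.mp hi)) (pow_pos ha0 _)).le)
    (fun i _ => by positivity) hα1.le
  have hterm : ∀ i ∈ Finset.range n,
      (w i * a ^ l i) ^ α * (((2:ℝ) ^ l i)⁻¹) ^ (1 - α) = w i ^ α := by
    intro i hi
    have hwi := hw i (Finset.mem_range.mp hi)
    rw [Real.mul_rpow hwi.le (pow_pos ha0 _).le, apow_eq a ha ha1,
      ← Real.rpow_natCast (2:ℝ) (l i), ← Real.rpow_neg (by norm_num : (0:ℝ) ≤ 2),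
      ← Real.rpow_mul (by norm_num : (0:ℝ) ≤ 2), ← Real.rpow_mul (by norm_num : (0:ℝ) ≤ 2),
      mul_assoc, ← Real.rpow_add (by norm_num : (0:ℝ) < 2), ← hc]
    have hz : c * (l i : ℝ) * α + -(l i : ℝ) * (1 - α) = 0 := by
      linear_combination (l i : ℝ) * hid
    rw [hz, Real.rpow_zero, mul_one]
  rw [Finset.sum_congr rfl hterm] at hrh
  -- W ≥ U^α
  have hV1 : (1:ℝ) ≤ V ^ (1 - α) := by
    have h := Real.rpow_le_rpow_of_exponent_ge hVpos hK (by linarith : 1 - α ≤ (0:ℝ))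
    rw [Real.rpow_zero] at h
    exact h
  have hUW : U ^ α ≤ W := by
    calc U ^ α = U ^ α * 1 := (mul_one _).symm
    _ ≤ U ^ α * V ^ (1 - α) := by
        exact mul_le_mul_of_nonneg_left hV1 (Real.rpow_pos_of_pos hUpos _).le
    _ ≤ W := hrh
  have hlogUW : α * Real.log U ≤ Real.log W := by
    rw [← Real.log_rpow hUpos]
    exact Real.log_le_log (Real.rpow_pos_of_pos hUpos _) hUW
  -- conclude
  show (1 / (1 - α)) * Real.logb 2 W ≤ Real.logb a U
  rw [Real.logb, Real.logb, hloga]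
  have h1 : 1 / (1 - α) * (Real.log W / Real.log 2) = Real.log W / ((1 - α) * Real.log 2) := by
    rw [div_mul_div_comm, one_mul]
  have h2 : Real.log U / (c * Real.log 2) = α * Real.log U / ((1 - α) * Real.log 2) := by
    rw [← hid]
    rw [show α * c * Real.log 2 = α * (c * Real.log 2) by ring, mul_div_mul_left]
    linarith
  rw [h1, h2, div_le_div_right_of_neg]
  · exact hlogUW
  · have : 1 - α < 0 := by linarith
    exact mul_neg_of_neg_of_pos this hlog2

lemma campbell_ub (n : ℕ) (hn : 0 < n) (a : ℝ) (ha : 1 / 2 < a) (ha1 : a < 1)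
    (w : ℕ → ℝ) (hw : ∀ i < n, 0 < w i) (α : ℝ) (hα : α = 1 / (1 + Real.logb 2 a)) :
    ∃ l : ℕ → ℕ, (∑ i ∈ Finset.range n, ((2:ℝ) ^ l i)⁻¹ ≤ 1) ∧
      LaN a n w l < 1 + (1 / (1 - α)) * Real.logb 2 (∑ i ∈ Finset.range n, w i ^ α) := by
  obtain ⟨ha0, hc0, hcm, h2c, hloga⟩ := base_facts a ha ha1
  set c : ℝ := Real.logb 2 a with hc
  have h1c : 0 < 1 + c := by linarith
  have hα1 : 1 < α := by rw [hα, lt_div_iff₀ h1c]; linarith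
  have hid : α * c = 1 - α := by
    have : α * (1 + c) = 1 := by rw [hα]; field_simp
    linarith [this]
  have hlog2 : 0 < Real.log 2 := Real.log_pos (by norm_num)
  set W : ℝ := ∑ i ∈ Finset.range n, w i ^ α with hW
  have hne : (Finset.range n).Nonempty := Finset.nonempty_range_iff.mpr hn.ne'
  have hWpos : 0 < W := Finset.sum_pos
    (fun i hi => Real.rpow_pos_of_pos (hw i (Finset.mem_range.mp hi)) _) hne
  -- the candidate lengths
  set x : ℕ → ℝ := fun i => Real.logb 2 (W / w i ^ α) with hx
  refine ⟨fun i => ⌈x i⌉₊, ?_, ?_⟩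
  · -- Kraft
    have hterm : ∀ i ∈ Finset.range n, ((2:ℝ) ^ ⌈x i⌉₊)⁻¹ ≤ w i ^ α / W := by
      intro i hi
      have hwi := hw i (Finset.mem_range.mp hi)
      have hwα : 0 < w i ^ α := Real.rpow_pos_of_pos hwi _
      have hq : 0 < W / w i ^ α := div_pos hWpos hwα
      have h2x : (2:ℝ) ^ x i = W / w i ^ α := Real.rpow_logb (by norm_num) (by norm_num) hq
      have hle : (2:ℝ) ^ x i ≤ (2:ℝ) ^ (⌈x i⌉₊ : ℝ) :=
        Real.rpow_le_rpow_of_exponent_le (by norm_num) (Nat.le_ceil _)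
      rw [Real.rpow_natCast] at hle
      rw [h2x] at hle
      rw [← one_div, div_le_div_iff₀ (by positivity) hWpos, one_mul]
      rw [div_le_iff₀ hwα] at hle
      calc W ≤ (2:ℝ) ^ ⌈x i⌉₊ * w i ^ α := hle
        _ = w i ^ α * (2:ℝ) ^ ⌈x i⌉₊ := by ring
    calc ∑ i ∈ Finset.range n, ((2:ℝ) ^ ⌈x i⌉₊)⁻¹
        ≤ ∑ i ∈ Finset.range n, w i ^ α / W := Finset.sum_le_sum hterm
      _ = 1 := by rw [← Finset.sum_div, ← hW, div_self hWpos.ne']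
  · -- the bound
    set S : ℝ := ∑ i ∈ Finset.range n, w i * a ^ (⌈x i⌉₊) with hS
    have hkey : a * W ^ (1 + c) < S := by
      have hterm : ∀ i ∈ Finset.range n,
          a * (W ^ c * w i ^ α) < w i * a ^ (⌈x i⌉₊) := by
        intro i hi
        have hwi := hw i (Finset.mem_range.mp hi)
        have hwα : 0 < w i ^ α := Real.rpow_pos_of_pos hwi _
        have hq : 0 < W / w i ^ α := div_pos hWpos hwα
        have hx0 : 0 ≤ x i := Real.logb_nonneg (by norm_num) <| by
          rw [le_div_iff₀ hwα, one_mul]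
          exact Finset.single_le_sum (f := fun i => w i ^ α)
            (fun j hj => (Real.rpow_pos_of_pos (hw j (Finset.mem_range.mp hj)) _).le) hi
        have hceil : (⌈x i⌉₊ : ℝ) < x i + 1 := Nat.ceil_lt_add_one hx0
        have hexp : c * (⌈x i⌉₊ : ℝ) > c * (x i + 1) := by
          rcases lt_or_eq_of_le (Nat.le_ceil (x i)) with h | h
          · nlinarith
          · nlinarith [Nat.le_ceil (x i)]
        have hlt : (2:ℝ) ^ (c * (x i + 1)) < (2:ℝ) ^ (c * (⌈x i⌉₊ : ℝ)) :=
          Real.rpow_lt_rpow_of_exponent_lt (by norm_num) hexp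
        have hal : a ^ (⌈x i⌉₊) = (2:ℝ) ^ (c * (⌈x i⌉₊ : ℝ)) := apow_eq a ha ha1 _
        have hval : (2:ℝ) ^ (c * (x i + 1)) = a * (W ^ c * w i ^ α / w i) := by
          rw [mul_add, mul_one, Real.rpow_add (by norm_num : (0:ℝ) < 2), ← h2c]
          have h2cx : (2:ℝ) ^ (c * x i) = (W / w i ^ α) ^ c := by
            rw [mul_comm, Real.rpow_mul (by norm_num : (0:ℝ) ≤ 2),
              Real.rpow_logb (by norm_num) (by norm_num) hq]
          have hpow : (w i ^ α) ^ c = w i ^ (1 - α) := by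
            rw [← Real.rpow_mul hwi.le, hid]
          rw [h2cx, Real.div_rpow hWpos.le hwα.le, hpow,
            Real.rpow_sub hwi, Real.rpow_one]
          field_simp
        have h1 : a * (W ^ c * w i ^ α / w i) < a ^ ⌈x i⌉₊ :=
          calc a * (W ^ c * w i ^ α / w i) = (2:ℝ) ^ (c * (x i + 1)) := hval.symm
            _ < (2:ℝ) ^ (c * (⌈x i⌉₊ : ℝ)) := hlt
            _ = a ^ ⌈x i⌉₊ := hal.symm
        have h2 : a * (W ^ c * w i ^ α) = w i * (a * (W ^ c * w i ^ α / w i)) := by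
          field_simp
        rw [h2]
        exact mul_lt_mul_of_pos_left h1 hwi
      have hsplit : a * W ^ (1 + c) = ∑ i ∈ Finset.range n, a * (W ^ c * w i ^ α) := by
        rw [← Finset.mul_sum, ← Finset.mul_sum, add_comm 1 c,
          Real.rpow_add_one hWpos.ne' c]
      rw [hsplit]
      exact Finset.sum_lt_sum_of_nonempty hne hterm
    -- conclude
    have hprodpos : 0 < a * W ^ (1 + c) := mul_pos ha0 (Real.rpow_pos_of_pos hWpos _)
    have hlog : Real.logb a S < Real.logb a (a * W ^ (1 + c)) :=
      Real.logb_lt_logb_of_base_lt_one ha0 ha1 hprodpos hkey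
    have hrhs : Real.logb a (a * W ^ (1 + c)) = 1 + (1 / (1 - α)) * Real.logb 2 W := by
      rw [Real.logb_mul ha0.ne' (Real.rpow_pos_of_pos hWpos _).ne',
        Real.logb_rpow_eq_mul_logb_of_pos hWpos]
      have hself : Real.logb a a = 1 := by
        rw [Real.logb, div_self (Real.log_ne_zero_of_pos_of_ne_one ha0 (ne_of_lt ha1))]
      rw [hself]
      congr 1
      have hfrac : 1 / (1 - α) = (1 + c) / c := by
        rw [← hid, hα]
        field_simp
      rw [Real.logb, Real.logb, hloga, hfrac]
      field_simp
    show Real.logb a S < _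
    rw [← hrhs]
    exact hlog


/-- the Huffman-based approximation bound chain
`H_α ≤ L_a^h ≤ L_a^ā ≤ L_a^h̃ < 1 + L_a^h < 2 + H_α`, where the approximation
tree's depths `lap` are dominated by the optimal Huffman-like lengths `lh`
incremented (by one) only at interior minimal points `M`. -/
theorem stmt12 (n : ℕ) (hn : 0 < n) (a : ℝ) (ha : 1 / 2 < a) (ha1 : a < 1)
    (w : ℕ → ℝ) (hw : ∀ i < n, 0 < w i) (hsum : ∑ i ∈ Finset.range n, w i = 1)
    (α : ℝ) (hα : α = 1 / (1 + Real.logb 2 a))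
    (Hα : ℝ) (hH : Hα = (1 / (1 - α)) * Real.logb 2 (∑ i ∈ Finset.range n, w i ^ α))
    (lh : ℕ → ℕ) (hlhK : ∑ i ∈ Finset.range n, ((2 : ℝ) ^ lh i)⁻¹ ≤ 1)
    (hlhOpt : ∀ l : ℕ → ℕ, (∑ i ∈ Finset.range n, ((2 : ℝ) ^ l i)⁻¹ ≤ 1) →
      LaN a n w lh ≤ LaN a n w l)
    (Lab : ℝ) (hLab : IsLeast (AlphaSet a n w) Lab)
    (M : Finset ℕ)
    (hM1 : ∀ i ∈ M, ∃ j k, PlateauMin n lh j k ∧ j ≤ i ∧ i ≤ j + k)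
    (hM2 : ∀ j k, PlateauMin n lh j k → ∃! i, i ∈ M ∧ j ≤ i ∧ i ≤ j + k)
    (lap : ℕ → ℕ) (T : BTree) (hT : T.depths = (List.range n).map lap)
    (hle : ∀ i < n, lap i ≤ (if i ∈ M then lh i + 1 else lh i)) :
    Hα ≤ LaN a n w lh ∧ LaN a n w lh ≤ Lab ∧ Lab ≤ LaN a n w lap ∧
    LaN a n w lap < 1 + LaN a n w lh ∧ 1 + LaN a n w lh < 2 + Hα := by
  obtain ⟨ha0, hc0, hcm, h2c, hloga⟩ := base_facts a ha ha1
  have hne : (Finset.range n).Nonempty := Finset.nonempty_range_iff.mpr hn.ne'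
  set Sh : ℝ := ∑ i ∈ Finset.range n, w i * a ^ lh i with hSh
  set Sap : ℝ := ∑ i ∈ Finset.range n, w i * a ^ lap i with hSap
  have hShpos : 0 < Sh := Finset.sum_pos
    (fun i hi => mul_pos (hw i (Finset.mem_range.mp hi)) (pow_pos ha0 _)) hne
  have p1 : Hα ≤ LaN a n w lh := by
    rw [hH]; exact campbell_lb n hn a ha ha1 w hw α hα lh hlhK
  have p2 : LaN a n w lh ≤ Lab := by
    obtain ⟨lT, T', hT', hx⟩ := hLab.1
    rw [hx]
    exact hlhOpt lT (le_of_eq (kraft_of_tree n lT T' hT'))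
  have p3 : Lab ≤ LaN a n w lap := hLab.2 ⟨lap, T, hT, rfl⟩
  have h0M : 0 ∉ M := by
    intro h0
    obtain ⟨j, k, hp, hj, _⟩ := hM1 0 h0
    exact absurd hp.1 (by omega)
  have hstrict : a * Sh < Sap := by
    rw [hSh, Finset.mul_sum]
    apply Finset.sum_lt_sum
    · intro i hi
      have hwi := hw i (Finset.mem_range.mp hi)
      have hli : lap i ≤ lh i + 1 := by
        have := hle i (Finset.mem_range.mp hi)
        split at this <;> omega
      calc a * (w i * a ^ lh i) = w i * a ^ (lh i + 1) := by rw [pow_succ]; ring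
        _ ≤ w i * a ^ lap i :=
          mul_le_mul_of_nonneg_left (pow_le_pow_of_le_one ha0.le ha1.le hli) hwi.le
    · refine ⟨0, Finset.mem_range.mpr hn, ?_⟩
      have hw0 := hw 0 hn
      have hl0 : lap 0 ≤ lh 0 := by
        have := hle 0 hn
        rw [if_neg h0M] at this
        exact this
      calc a * (w 0 * a ^ lh 0) = w 0 * a ^ (lh 0 + 1) := by rw [pow_succ]; ring
        _ < w 0 * a ^ lap 0 :=
          mul_lt_mul_of_pos_left (pow_lt_pow_right_of_lt_one₀ ha0 ha1 (by omega)) hw0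
  have p4 : LaN a n w lap < 1 + LaN a n w lh := by
    have h1 : 1 + LaN a n w lh = Real.logb a (a * Sh) := by
      rw [Real.logb_mul ha0.ne' hShpos.ne']
      have hself : Real.logb a a = 1 := by
        rw [Real.logb, div_self (Real.log_ne_zero_of_pos_of_ne_one ha0 (ne_of_lt ha1))]
      rw [hself]
      rfl
    rw [h1]
    exact Real.logb_lt_logb_of_base_lt_one ha0 ha1 (mul_pos ha0 hShpos) hstrict
  have p5 : 1 + LaN a n w lh < 2 + Hα := by
    obtain ⟨l, hK, hlt⟩ := campbell_ub n hn a ha ha1 w hw α hα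
    have hopt := hlhOpt l hK
    rw [hH]
    linarith
  exact ⟨p1, p2, p3, p4, p5⟩
end

section
/- Approximation bound chain (Shannon-based): for a ∈ (1/2,1) and probability vector w with positive entries, H_α(w) ≤ L_a^h(w) ≤ L_a^ā(w) ≤ L_a^s̃(w) < 1 + L_a^s(w) < 2 + H_α(w), where l^s are the Shannon-like lengths l^s(i) = ⌈-α log₂ w(i) + log₂ Σ_j w(j)^α⌉, L_a^s(w) = L_a(w, l^s), and L_a^s̃(w) is the cost of the alphabetic code obtained from l^s by the minimal-point adjustment and cleanup. -/
open Real Finset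

/-! With `β = log₂ a ∈ (-1, 0)` and `α = 1 / (1 + β)`, Hölder's inequality for the conjugate
exponents `α` and `-1/β` bounds the cost `∑ w(i) a^{l(i)}` of any lengths satisfying Kraft's
inequality by `(∑ w(i)^α)^{1/α}`, whose `log_a` is `H_α`. The Shannon-like lengths exceed
`-α log₂ w(i) + log₂ ∑ w(j)^α` by less than one, so their cost is more than `a` times that
bound. The depths of a full binary tree satisfy Kraft's inequality with equality, which places
the alphabetic optimum above `L_a^h`. The approximation tree lengthens each codeword by at most one
and leaves the first one alone (index `0` is never an interior minimum), so its cost stays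
strictly above `a` times the cost of the Shannon-like lengths. -/

namespace BTree

theorem sum_inv_two_pow_depths (t : BTree) :
    (t.depths.map fun d => ((2 : ℝ) ^ d)⁻¹).sum = 1 := by
  induction t with
  | leaf => simp [depths]
  | node l r ihl ihr =>
    have halve (L : List ℕ) : ((L.map (· + 1)).map fun d => ((2 : ℝ) ^ d)⁻¹).sum
        = 2⁻¹ * (L.map fun d => ((2 : ℝ) ^ d)⁻¹).sum := by
      induction L with
      | nil => simp
      | cons x xs ih =>
        simp only [List.map_cons, List.sum_cons, ih, pow_succ, mul_inv]
        ring
    rw [depths, halve, List.map_append, List.sum_append, ihl, ihr]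
    norm_num

theorem sum_range_inv_two_pow_eq_one {t : BTree} {n : ℕ} {l : ℕ → ℕ}
    (ht : t.depths = (List.range n).map l) : ∑ i ∈ range n, ((2 : ℝ) ^ l i)⁻¹ = 1 := by
  have h := t.sum_inv_two_pow_depths
  rwa [ht, List.map_map, ← Multiset.sum_coe, ← Multiset.map_coe, ← Multiset.range,
    ← Finset.range_val, ← Finset.sum_eq_multiset_sum] at h

end BTree

theorem exists_kraft_of_mem_alphaSet {a : ℝ} {n : ℕ} {w : ℕ → ℝ} {x : ℝ}
    (hx : x ∈ AlphaSet a n w) :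
    ∃ l : ℕ → ℕ, ∑ i ∈ range n, ((2 : ℝ) ^ l i)⁻¹ ≤ 1 ∧ x = LaN a n w l := by
  obtain ⟨l, t, ht, rfl⟩ := hx
  exact ⟨l, (BTree.sum_range_inv_two_pow_eq_one ht).le, rfl⟩

theorem logb_two_mem_Ioo {a : ℝ} (ha : 1 / 2 < a) (ha1 : a < 1) :
    logb 2 a ∈ Set.Ioo (-1) 0 := by
  refine ⟨?_, logb_neg one_lt_two (by linarith) ha1⟩
  have h := logb_lt_logb one_lt_two (by norm_num) ha
  rwa [one_div, logb_inv, logb_self_eq_one one_lt_two] at h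

theorem logb_self_mul {a x : ℝ} (ha0 : 0 < a) (ha1 : a ≠ 1) (hx : x ≠ 0) :
    logb a (a * x) = 1 + logb a x := by
  rw [logb_mul ha0.ne' hx, logb_self_eq_one_iff.mpr ⟨ha0.ne', ha1, by linarith⟩]

theorem rpow_logb_two_comm {a y : ℝ} (ha : 0 < a) (hy : 0 < y) :
    a ^ logb 2 y = y ^ logb 2 a := by
  rw [← rpow_logb two_pos (by norm_num) hy, ← rpow_mul two_pos.le,
    logb_rpow two_pos (by norm_num), mul_comm, rpow_mul two_pos.le,
    rpow_logb two_pos (by norm_num) ha]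

/-- `S` stands for the normalizer `∑ w(j)^α`. -/
noncomputable def shannonLength (α S x : ℝ) : ℕ := ⌈-α * logb 2 x + logb 2 S⌉.toNat

section RenyiExponent

variable {a α : ℝ}

theorem sum_mul_pow_le_of_kraft {ι : Type*} (s : Finset ι) (ha : 1 / 2 < a) (ha1 : a < 1)
    (hα : α * (1 + logb 2 a) = 1) {w : ι → ℝ} (hw : ∀ i ∈ s, 0 ≤ w i) {l : ι → ℕ}
    (hl : ∑ i ∈ s, ((2 : ℝ) ^ l i)⁻¹ ≤ 1) :
    ∑ i ∈ s, w i * a ^ l i ≤ (∑ i ∈ s, w i ^ α) ^ α⁻¹ := by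
  obtain ⟨hβ1, hβ0⟩ := logb_two_mem_Ioo ha ha1
  set β := logb 2 a
  have ha2 : (2 : ℝ) ^ β = a := rpow_logb two_pos (by norm_num) (by linarith)
  have hαinv : α⁻¹ = 1 + β := inv_eq_of_mul_eq_one_right hα
  have hconj : α.HolderConjugate (-β⁻¹) := by
    refine holderConjugate_iff.mpr ⟨?_, by rw [hαinv, inv_neg, inv_inv]; ring⟩
    rw [← inv_inv α, hαinv, one_lt_inv₀ (by linarith)]
    linarith
  have hβne : β ≠ 0 := hβ0.ne
  have hpow (i : ι) : (a ^ l i) ^ (-β⁻¹) = ((2 : ℝ) ^ l i)⁻¹ := by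
    rw [← ha2, ← rpow_natCast, ← rpow_natCast, ← rpow_mul two_pos.le, ← rpow_mul two_pos.le,
      ← rpow_neg two_pos.le]
    congr 1
    field_simp
  have hq : 0 ≤ 1 / -β⁻¹ := by
    rw [one_div, inv_neg, inv_inv]
    linarith
  calc ∑ i ∈ s, w i * a ^ l i
      ≤ (∑ i ∈ s, w i ^ α) ^ (1 / α) * (∑ i ∈ s, (a ^ l i) ^ (-β⁻¹)) ^ (1 / -β⁻¹) :=
        inner_le_Lp_mul_Lq_of_nonneg s hconj hw fun i _ => by positivity
    _ ≤ (∑ i ∈ s, w i ^ α) ^ (1 / α) * 1 := by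
        gcongr
        · exact rpow_nonneg (sum_nonneg fun i hi => rpow_nonneg (hw i hi) α) _
        · simp only [hpow]
          exact rpow_le_one (sum_nonneg fun i _ => by positivity) hl hq
    _ = (∑ i ∈ s, w i ^ α) ^ α⁻¹ := by rw [mul_one, one_div]

theorem renyi_eq_logb_rpow_inv (ha0 : 0 < a) (ha1 : a < 1) (hα : α * (1 + logb 2 a) = 1)
    {S : ℝ} (hS : 0 < S) :
    1 / (1 - α) * logb 2 S = logb a (S ^ α⁻¹) := by
  have hβ : logb 2 a ≠ 0 := (logb_neg one_lt_two ha0 ha1).ne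
  have hsub : 1 - α = α * logb 2 a := by linarith
  rw [hsub, logb_rpow_eq_mul_logb_of_pos hS, one_div, mul_inv, inv_eq_of_mul_eq_one_right hα,
    ← mul_logb (a := 2) (c := S) ha0.ne' ha1.ne (by linarith)]
  field_simp

theorem mul_rpow_mul_rpow_lt_mul_pow_shannonLength (ha0 : 0 < a) (ha1 : a < 1)
    (hα : α * (1 + logb 2 a) = 1) {S x : ℝ} (hx : 0 < x) (hxS : x ^ α ≤ S) :
    a * (x ^ α * S ^ logb 2 a) < x * a ^ shannonLength α S x := by
  have hS : 0 < S := (rpow_pos_of_pos hx α).trans_le hxS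
  set c := -α * logb 2 x + logb 2 S
  have hc : 0 ≤ c := by
    have h := logb_le_logb_of_le one_lt_two (rpow_pos_of_pos hx α) hxS
    rw [logb_rpow_eq_mul_logb_of_pos hx] at h
    linarith
  have hlen : (shannonLength α S x : ℝ) < c + 1 := by
    rw [shannonLength, ← Int.cast_natCast, Int.toNat_of_nonneg (Int.ceil_nonneg hc)]
    exact Int.ceil_lt_add_one c
  have hexp : 1 + logb 2 a * -α = α := by linarith
  have hcost : x * a ^ c = x ^ α * S ^ logb 2 a := by
    rw [rpow_add ha0, mul_comm (-α), rpow_mul ha0.le, rpow_logb_two_comm ha0 hx,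
      rpow_logb_two_comm ha0 hS, ← rpow_mul hx.le, ← mul_assoc,
      ← rpow_one_add' hx.le (by rw [hexp]; exact left_ne_zero_of_mul_eq_one hα), hexp]
  calc a * (x ^ α * S ^ logb 2 a) = x * a ^ (c + 1) := by
        rw [← hcost, rpow_add_one ha0.ne']
        ring
    _ < x * a ^ shannonLength α S x := by
        rw [← rpow_natCast]
        exact mul_lt_mul_of_pos_left (rpow_lt_rpow_of_exponent_gt ha0 ha1 hlen) hx

theorem mul_rpow_inv_lt_sum_mul_pow_shannonLength {ι : Type*} (ha0 : 0 < a) (ha1 : a < 1)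
    (hα : α * (1 + logb 2 a) = 1) {s : Finset ι} (hs : s.Nonempty) {w : ι → ℝ}
    (hw : ∀ i ∈ s, 0 < w i) :
    a * (∑ i ∈ s, w i ^ α) ^ α⁻¹ <
      ∑ i ∈ s, w i * a ^ shannonLength α (∑ j ∈ s, w j ^ α) (w i) := by
  set S := ∑ j ∈ s, w j ^ α
  have hS : 0 < S := sum_pos (fun i hi => rpow_pos_of_pos (hw i hi) α) hs
  calc a * S ^ α⁻¹ = ∑ i ∈ s, a * (w i ^ α * S ^ logb 2 a) := by
        rw [← mul_sum, ← sum_mul, inv_eq_of_mul_eq_one_right hα,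
          rpow_one_add' hS.le (right_ne_zero_of_mul_eq_one hα)]
    _ < ∑ i ∈ s, w i * a ^ shannonLength α S (w i) :=
        sum_lt_sum_of_nonempty hs fun i hi =>
          mul_rpow_mul_rpow_lt_mul_pow_shannonLength ha0 ha1 hα (hw i hi)
            (single_le_sum (fun j hj => (rpow_pos_of_pos (hw j hj) α).le) hi)

end RenyiExponent

section Cost

variable {a : ℝ} {n : ℕ} {w : ℕ → ℝ}

theorem sum_range_mul_pow_pos (ha0 : 0 < a) (hn : 0 < n) (hw : ∀ i < n, 0 < w i) (l : ℕ → ℕ) :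
    0 < ∑ i ∈ range n, w i * a ^ l i :=
  sum_pos (fun i hi => mul_pos (hw i (mem_range.mp hi)) (pow_pos ha0 _))
    (nonempty_range_iff.mpr hn.ne')

theorem logb_rpow_inv_le_LaN_of_kraft {α : ℝ} (ha : 1 / 2 < a) (ha1 : a < 1)
    (hα : α * (1 + logb 2 a) = 1) (hn : 0 < n) (hw : ∀ i < n, 0 < w i) {l : ℕ → ℕ}
    (hl : ∑ i ∈ range n, ((2 : ℝ) ^ l i)⁻¹ ≤ 1) :
    logb a ((∑ i ∈ range n, w i ^ α) ^ α⁻¹) ≤ LaN a n w l := by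
  have ha0 : 0 < a := by linarith
  have hcost :=
    sum_mul_pow_le_of_kraft _ ha ha1 hα (fun i hi => (hw i (mem_range.mp hi)).le) hl
  have hpos := sum_range_mul_pow_pos ha0 hn hw l
  exact (logb_le_logb_of_base_lt_one ha0 ha1 (hpos.trans_le hcost) hpos).mpr hcost

theorem LaN_lt_one_add_logb_rpow_inv {α : ℝ} (ha0 : 0 < a) (ha1 : a < 1)
    (hα : α * (1 + logb 2 a) = 1) (hn : 0 < n) (hw : ∀ i < n, 0 < w i) {l : ℕ → ℕ}
    (hl : ∀ i < n, l i = shannonLength α (∑ j ∈ range n, w j ^ α) (w i)) :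
    LaN a n w l < 1 + logb a ((∑ i ∈ range n, w i ^ α) ^ α⁻¹) := by
  have hS : 0 < (∑ i ∈ range n, w i ^ α) ^ α⁻¹ :=
    rpow_pos_of_pos (sum_pos (fun i hi => rpow_pos_of_pos (hw i (mem_range.mp hi)) α)
      (nonempty_range_iff.mpr hn.ne')) _
  rw [← logb_self_mul ha0 ha1.ne hS.ne', LaN,
    sum_congr rfl fun i hi => by rw [hl i (mem_range.mp hi)]]
  exact logb_lt_logb_of_base_lt_one ha0 ha1 (mul_pos ha0 hS)
    (mul_rpow_inv_lt_sum_mul_pow_shannonLength ha0 ha1 hα (nonempty_range_iff.mpr hn.ne')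
      fun i hi => hw i (mem_range.mp hi))

theorem LaN_lt_one_add_LaN (ha0 : 0 < a) (ha1 : a < 1) (hw : ∀ i < n, 0 < w i)
    {l l' : ℕ → ℕ} (hle : ∀ i < n, l' i ≤ l i + 1) {i₀ : ℕ} (hi₀ : i₀ < n)
    (hi₀le : l' i₀ ≤ l i₀) :
    LaN a n w l' < 1 + LaN a n w l := by
  have hstep (i : ℕ) (hi : i < n) (h : l' i ≤ l i + 1) :
      a * (w i * a ^ l i) ≤ w i * a ^ l' i := by
    rw [mul_left_comm, ← pow_succ']
    exact mul_le_mul_of_nonneg_left (pow_le_pow_of_le_one ha0.le ha1.le h) (hw i hi).le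
  have hlt : a * (w i₀ * a ^ l i₀) < w i₀ * a ^ l' i₀ := by
    rw [mul_left_comm, ← pow_succ']
    exact mul_lt_mul_of_pos_left (pow_lt_pow_right_of_lt_one₀ ha0 ha1 (by omega)) (hw i₀ hi₀)
  have hpos := sum_range_mul_pow_pos ha0 (by omega) hw l
  rw [LaN, LaN, ← logb_self_mul ha0 ha1.ne hpos.ne']
  refine logb_lt_logb_of_base_lt_one ha0 ha1 (mul_pos ha0 hpos) ?_
  rw [mul_sum]
  exact sum_lt_sum (fun i hi => hstep i (mem_range.mp hi) (hle i (mem_range.mp hi)))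
    ⟨i₀, mem_range.mpr hi₀, hlt⟩

end Cost

theorem stmt13_general (n : ℕ) (hn : 0 < n) (a : ℝ) (ha : 1 / 2 < a) (ha1 : a < 1)
    (w : ℕ → ℝ) (hw : ∀ i < n, 0 < w i)
    (α : ℝ) (hα : α = 1 / (1 + Real.logb 2 a))
    (Hα : ℝ) (hH : Hα = (1 / (1 - α)) * Real.logb 2 (∑ i ∈ Finset.range n, w i ^ α))
    (ls : ℕ → ℕ)
    (hls : ∀ i < n, ls i = (⌈-α * Real.logb 2 (w i) +
      Real.logb 2 (∑ j ∈ Finset.range n, w j ^ α)⌉ : ℤ).toNat)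
    (lh : ℕ → ℕ) (hlhK : ∑ i ∈ Finset.range n, ((2 : ℝ) ^ lh i)⁻¹ ≤ 1)
    (hlhOpt : ∀ l : ℕ → ℕ, (∑ i ∈ Finset.range n, ((2 : ℝ) ^ l i)⁻¹ ≤ 1) →
      LaN a n w lh ≤ LaN a n w l)
    (Lab : ℝ) (hLab : IsLeast (AlphaSet a n w) Lab)
    (M : Finset ℕ)
    (hM1 : ∀ i ∈ M, ∃ j k, PlateauMin n ls j k ∧ j ≤ i ∧ i ≤ j + k)
    (lap : ℕ → ℕ) (T : BTree) (hT : T.depths = (List.range n).map lap)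
    (hle : ∀ i < n, lap i ≤ (if i ∈ M then ls i + 1 else ls i)) :
    Hα ≤ LaN a n w lh ∧ LaN a n w lh ≤ Lab ∧ Lab ≤ LaN a n w lap ∧
    LaN a n w lap < 1 + LaN a n w ls ∧ 1 + LaN a n w ls < 2 + Hα := by
  have ha0 : 0 < a := by linarith
  have hα' : α * (1 + logb 2 a) = 1 := by
    rw [hα, one_div, inv_mul_cancel₀]
    linarith [(logb_two_mem_Ioo ha ha1).1]
  have hS : 0 < ∑ i ∈ range n, w i ^ α :=
    sum_pos (fun i hi => rpow_pos_of_pos (hw i (mem_range.mp hi)) α)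
      (nonempty_range_iff.mpr hn.ne')
  rw [renyi_eq_logb_rpow_inv ha0 ha1 hα' hS] at hH
  obtain ⟨l, hl, rfl⟩ := exists_kraft_of_mem_alphaSet hLab.1
  have h0M : 0 ∉ M := fun h0 => by
    obtain ⟨j, k, ⟨hj, -⟩, hj0, -⟩ := hM1 0 h0
    omega
  have hlap_le (i : ℕ) (hi : i < n) : lap i ≤ ls i + 1 := by
    have := hle i hi
    split_ifs at this <;> omega
  refine ⟨hH ▸ logb_rpow_inv_le_LaN_of_kraft ha ha1 hα' hn hw hlhK, hlhOpt l hl,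
    hLab.2 ⟨lap, T, hT, rfl⟩,
    LaN_lt_one_add_LaN ha0 ha1 hw hlap_le hn (by simpa [h0M] using hle 0 hn), ?_⟩
  linarith [LaN_lt_one_add_logb_rpow_inv ha0 ha1 hα' hn hw hls]

/-- the Shannon-based approximation bound chain
`H_α ≤ L_a^h ≤ L_a^ā ≤ L_a^s̃ < 1 + L_a^s < 2 + H_α`, where `ls` are the
Shannon-like lengths and the approximation tree's depths `lap` are dominated by
`ls` incremented only at interior minimal points `M` of `ls`. -/
theorem stmt13 (n : ℕ) (hn : 0 < n) (a : ℝ) (ha : 1 / 2 < a) (ha1 : a < 1)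
    (w : ℕ → ℝ) (hw : ∀ i < n, 0 < w i) (hsum : ∑ i ∈ Finset.range n, w i = 1)
    (α : ℝ) (hα : α = 1 / (1 + Real.logb 2 a))
    (Hα : ℝ) (hH : Hα = (1 / (1 - α)) * Real.logb 2 (∑ i ∈ Finset.range n, w i ^ α))
    (ls : ℕ → ℕ)
    (hls : ∀ i < n, ls i = (⌈-α * Real.logb 2 (w i) +
      Real.logb 2 (∑ j ∈ Finset.range n, w j ^ α)⌉ : ℤ).toNat)
    (lh : ℕ → ℕ) (hlhK : ∑ i ∈ Finset.range n, ((2 : ℝ) ^ lh i)⁻¹ ≤ 1)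
    (hlhOpt : ∀ l : ℕ → ℕ, (∑ i ∈ Finset.range n, ((2 : ℝ) ^ l i)⁻¹ ≤ 1) →
      LaN a n w lh ≤ LaN a n w l)
    (Lab : ℝ) (hLab : IsLeast (AlphaSet a n w) Lab)
    (M : Finset ℕ)
    (hM1 : ∀ i ∈ M, ∃ j k, PlateauMin n ls j k ∧ j ≤ i ∧ i ≤ j + k)
    (hM2 : ∀ j k, PlateauMin n ls j k → ∃! i, i ∈ M ∧ j ≤ i ∧ i ≤ j + k)
    (lap : ℕ → ℕ) (T : BTree) (hT : T.depths = (List.range n).map lap)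
    (hle : ∀ i < n, lap i ≤ (if i ∈ M then ls i + 1 else ls i)) :
    Hα ≤ LaN a n w lh ∧ LaN a n w lh ≤ Lab ∧ Lab ≤ LaN a n w lap ∧
    LaN a n w lap < 1 + LaN a n w ls ∧ 1 + LaN a n w ls < 2 + Hα :=
  stmt13_general n hn a ha ha1 w hw α hα Hα hH ls hls lh hlhK hlhOpt Lab hLab M hM1 lap T hT hle
end
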